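/- arXiv:2308.00940 — 3 statements merged into one kernel-verified Lean document; each statement's English description precedes it below -/
import Mathlib

section
/- Let A ∈ ℝ and define, for q ≥ 0, B₁(q) = −4q² − 2q + Aq/(1 + 2q) and B₂(q) = −4q² − 6q − 2 + A(1 + q)/(1 + 2q). Then B₁(q) ≤ 0 and B₂(q) ≤ 0 hold for all q ≥ 0 if and only if A ≤ 2. -/
/-- With `B₁(q) = −4q² − 2q + Aq/(1+2q)` and `B₂(q) = −4q² − 6q − 2 + A(1+q)/(1+2q)`,
both `B₁(q) ≤ 0` and `B₂(q) ≤ 0` hold for all `q ≥ 0` if and only if `A ≤ 2`. -/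
theorem stmt_3 (A : ℝ) :
    (∀ q : ℝ, 0 ≤ q →
        -4 * q ^ 2 - 2 * q + A * q / (1 + 2 * q) ≤ 0 ∧
        -4 * q ^ 2 - 6 * q - 2 + A * (1 + q) / (1 + 2 * q) ≤ 0) ↔ A ≤ 2 := by
  constructor
  · intro h
    have h0 := (h 0 le_rfl).2
    norm_num at h0
    linarith
  · intro hA q hq
    have hpos : (0:ℝ) < 1 + 2 * q := by linarith
    constructor
    · 
      have : A * q ≤ 2 * q := by nlinarith
      have h2 : A * q / (1 + 2 * q) ≤ 2 * q / (1 + 2 * q) :=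
        div_le_div_of_nonneg_right this hpos.le |>.trans_eq rfl
      have h3 : 2 * q / (1 + 2 * q) ≤ 4 * q ^ 2 + 2 * q := by
        rw [div_le_iff₀ hpos]; nlinarith
      linarith
    · have : A * (1 + q) ≤ 2 * (1 + q) := by nlinarith
      have h2 : A * (1 + q) / (1 + 2 * q) ≤ 2 * (1 + q) / (1 + 2 * q) :=
        div_le_div_of_nonneg_right this hpos.le |>.trans_eq rfl
      have h3 : 2 * (1 + q) / (1 + 2 * q) ≤ 4 * q ^ 2 + 6 * q + 2 := by
        rw [div_le_iff₀ hpos]; nlinarith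
      linarith
end

section
/- Let n ≥ 2, let λ₁, …, λₙ be nonnegative reals, set S = Σ_{k=1}^{n} λₖ, fix an index i ∈ {1, …, n}, and let (x_j)_{j≠i} be arbitrary reals. Then Σ_{j≠i} [−2S(2S − λᵢ − λⱼ) + 2(λⱼ − λᵢ)²]·xⱼ² + Σ_{j≠l, j,l≠i} [S(λⱼ + λₗ − S − λᵢ) + 2(λⱼ − λᵢ)(λₗ − λᵢ)]·xⱼxₗ ≤ 0. -/
/-!
Put `a = λᵢ`, `W = S - a = Σ_{j≠i} λⱼ`, `u = Σ xⱼ`, `v = Σ λⱼ xⱼ`, `P = Σ xⱼ²` (sums over `j ≠ i`).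
Completing the off-diagonal sum to the full double sum turns the left-hand side into
`E = 2(v - a u)² + 2 S u v - S (S + a) u² - 3 S W P`, and one checks the identity
`W E = -S (v - W u)² - 2a (v + W u)² - 3 S (W² P - v²)`.
Since `λ ≥ 0`, Cauchy–Schwarz gives `v² ≤ (Σ λⱼ²) P ≤ W² P`, so `W E ≤ 0`; and when `W = 0`
also `v = 0`, whence `E = 0`.
-/

open Finset

namespace Finset

variable {ι : Type*}

theorem sum_sum_erase_eq_sub [DecidableEq ι] (T : Finset ι) (f : ι → ι → ℝ) :
    ∑ j ∈ T, ∑ l ∈ T.erase j, f j l = ∑ j ∈ T, ∑ l ∈ T, f j l - ∑ j ∈ T, f j j := by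
  rw [← sum_sub_distrib]
  exact sum_congr rfl fun j hj => sum_erase_eq_sub hj

theorem sq_sum_mul_le_sq_sum_mul_sum_sq (T : Finset ι) {lam : ι → ℝ} (hlam : ∀ j ∈ T, 0 ≤ lam j)
    (x : ι → ℝ) : (∑ j ∈ T, lam j * x j) ^ 2 ≤ (∑ j ∈ T, lam j) ^ 2 * ∑ j ∈ T, x j ^ 2 :=
  (sum_mul_sq_le_sq_mul_sq T lam x).trans <|
    mul_le_mul_of_nonneg_right (sum_sq_le_sq_sum_of_nonneg hlam) (sum_nonneg fun _ _ => sq_nonneg _)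

end Finset

section QuadraticForm

variable {ι : Type*} (T : Finset ι) (lam x : ι → ℝ) (S a : ℝ)

theorem sum_sum_bilinear_eq :
    ∑ j ∈ T, ∑ l ∈ T, (S * (lam j + lam l - S - a) + 2 * (lam j - a) * (lam l - a)) * (x j * x l)
      = 2 * (∑ j ∈ T, lam j * x j - a * ∑ j ∈ T, x j) ^ 2
        + 2 * S * (∑ j ∈ T, x j) * (∑ j ∈ T, lam j * x j) - S * (S + a) * (∑ j ∈ T, x j) ^ 2 := by
  set u := ∑ j ∈ T, x j with hu
  set v := ∑ j ∈ T, lam j * x j with hv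
  rw [show 2 * S * u * v = S * u * v + S * v * u by ring, hu, hv]
  simp only [sq, mul_sum, sum_mul, ← sum_sub_distrib, ← sum_add_distrib]
  exact sum_congr rfl fun j _ => sum_congr rfl fun l _ => by ring

theorem quadraticForm_eq [DecidableEq ι] :
    ∑ j ∈ T, (-2 * S * (2 * S - a - lam j) + 2 * (lam j - a) ^ 2) * x j ^ 2
      + ∑ j ∈ T, ∑ l ∈ T.erase j,
          (S * (lam j + lam l - S - a) + 2 * (lam j - a) * (lam l - a)) * (x j * x l)
      = 2 * (∑ j ∈ T, lam j * x j - a * ∑ j ∈ T, x j) ^ 2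
        + 2 * S * (∑ j ∈ T, x j) * (∑ j ∈ T, lam j * x j) - S * (S + a) * (∑ j ∈ T, x j) ^ 2
        - 3 * S * (S - a) * ∑ j ∈ T, x j ^ 2 := by
  have hdiag : ∑ j ∈ T, (-2 * S * (2 * S - a - lam j) + 2 * (lam j - a) ^ 2) * x j ^ 2
      - ∑ j ∈ T, (S * (lam j + lam j - S - a) + 2 * (lam j - a) * (lam j - a)) * (x j * x j)
      = -(3 * S * (S - a) * ∑ j ∈ T, x j ^ 2) := by
    rw [← sum_sub_distrib, mul_sum, ← sum_neg_distrib]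
    exact sum_congr rfl fun j _ => by ring
  rw [sum_sum_erase_eq_sub, sum_sum_bilinear_eq]
  linarith

end QuadraticForm

theorem quadraticForm_closedForm_nonpos {S a u v P : ℝ} (ha : 0 ≤ a) (haS : a ≤ S)
    (hv : v ^ 2 ≤ (S - a) ^ 2 * P) :
    2 * (v - a * u) ^ 2 + 2 * S * u * v - S * (S + a) * u ^ 2 - 3 * S * (S - a) * P ≤ 0 := by
  rcases haS.eq_or_lt with rfl | hlt
  · have hv0 : v = 0 := by nlinarith [sq_nonneg v]
    subst hv0
    exact le_of_eq (by ring)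
  · refine nonpos_of_mul_nonpos_right ?_ (sub_pos.2 hlt)
    have hS : 0 ≤ S := ha.trans hlt.le
    have hgap : 0 ≤ (S - a) ^ 2 * P - v ^ 2 := sub_nonneg.2 hv
    calc (S - a) * (2 * (v - a * u) ^ 2 + 2 * S * u * v - S * (S + a) * u ^ 2
            - 3 * S * (S - a) * P)
        = -(S * (v - (S - a) * u) ^ 2 + 2 * a * (v + (S - a) * u) ^ 2
            + 3 * S * ((S - a) ^ 2 * P - v ^ 2)) := by ring
      _ ≤ 0 := neg_nonpos.2 (by positivity)

theorem stmt_9_general (n : ℕ) (lam : Fin n → ℝ) (hlam : ∀ k, 0 ≤ lam k)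
    (S : ℝ) (hS : S = ∑ k, lam k) (i : Fin n) (x : Fin n → ℝ) :
    (∑ j ∈ Finset.univ \ {i},
        (-2 * S * (2 * S - lam i - lam j) + 2 * (lam j - lam i) ^ 2) * (x j) ^ 2)
      + (∑ j ∈ Finset.univ \ {i}, ∑ l ∈ Finset.univ \ {i, j},
          (S * (lam j + lam l - S - lam i) + 2 * (lam j - lam i) * (lam l - lam i))
            * (x j * x l)) ≤ 0 := by
  set T : Finset (Fin n) := univ \ {i}
  have herase : ∀ j, univ \ {i, j} = T.erase j := fun j => by
    ext l; simp [T, and_comm]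
  have hW : ∑ j ∈ T, lam j = S - lam i := by
    rw [hS, sum_sdiff_eq_sub (subset_univ _), sum_singleton]
  simp_rw [herase]
  rw [quadraticForm_eq]
  refine quadraticForm_closedForm_nonpos (hlam i) ?_ ?_
  · linarith [sum_nonneg fun j (_ : j ∈ T) => hlam j]
  · exact hW ▸ sq_sum_mul_le_sq_sum_mul_sum_sq T (fun j _ => hlam j) x

/-- With `λ₁, …, λₙ ≥ 0` (`n ≥ 2`), `S = Σ λₖ`, a fixed index `i` and arbitrary reals
`(xⱼ)_{j≠i}`:
`Σ_{j≠i} [−2S(2S−λᵢ−λⱼ) + 2(λⱼ−λᵢ)²] xⱼ²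
 + Σ_{j≠l, j,l≠i} [S(λⱼ+λₗ−S−λᵢ) + 2(λⱼ−λᵢ)(λₗ−λᵢ)] xⱼxₗ ≤ 0`. -/
theorem stmt_9 (n : ℕ) (hn : 2 ≤ n) (lam : Fin n → ℝ) (hlam : ∀ k, 0 ≤ lam k)
    (S : ℝ) (hS : S = ∑ k, lam k) (i : Fin n) (x : Fin n → ℝ) :
    (∑ j ∈ Finset.univ \ {i},
        (-2 * S * (2 * S - lam i - lam j) + 2 * (lam j - lam i) ^ 2) * (x j) ^ 2)
      + (∑ j ∈ Finset.univ \ {i}, ∑ l ∈ Finset.univ \ {i, j},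
          (S * (lam j + lam l - S - lam i) + 2 * (lam j - lam i) * (lam l - lam i))
            * (x j * x l)) ≤ 0 :=
  stmt_9_general n lam hlam S hS i x
end

section
/- Let n ≥ 3 and let A be a real number with 1 < A ≤ n/(n−1). Let λ₁, …, λₙ be strictly positive reals, fix an index m, and let (x_i)_{i≠m} be arbitrary reals. Then Σ_{i≠m} [(A−2)(λᵢ² + λ_m²) − (2A+4)λᵢλ_m − 2(λᵢ + λ_m)·Σ_{l≠i,m} λₗ]·(x_i²/λᵢ²) + Σ_{i≠j, i,j≠m} [(A−1)λ_m² + Aλᵢλⱼ − (A+1)(λᵢ + λⱼ)λ_m − λ_m·Σ_{l≠i,j,m} λₗ]·(x_i x_j/(λᵢλⱼ)) ≤ 0. -/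
open Finset

set_option maxHeartbeats 1000000 in
/-- For `n ≥ 3`, `1 < A ≤ n/(n−1)`, positive reals `λ₁, …, λₙ`, a fixed index `m`,
and arbitrary reals `(xᵢ)_{i≠m}`:
`Σ_{i≠m} [(A−2)(λᵢ²+λ_m²) − (2A+4)λᵢλ_m − 2(λᵢ+λ_m)Σ_{l≠i,m} λₗ] xᵢ²/λᵢ²
 + Σ_{i≠j, i,j≠m} [(A−1)λ_m² + Aλᵢλⱼ − (A+1)(λᵢ+λⱼ)λ_m − λ_m Σ_{l≠i,j,m} λₗ]
     xᵢxⱼ/(λᵢλⱼ) ≤ 0`. -/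
theorem stmt_15 (n : ℕ) (hn : 3 ≤ n) (A : ℝ) (hA1 : 1 < A)
    (hA2 : A ≤ (n : ℝ) / ((n : ℝ) - 1))
    (lam : Fin n → ℝ) (hlam : ∀ i, 0 < lam i) (m : Fin n) (x : Fin n → ℝ) :
    (∑ i ∈ Finset.univ \ {m},
        ((A - 2) * ((lam i) ^ 2 + (lam m) ^ 2) - (2 * A + 4) * lam i * lam m
            - 2 * (lam i + lam m) * (∑ l ∈ Finset.univ \ {i, m}, lam l))
          * ((x i) ^ 2 / (lam i) ^ 2))
      + (∑ i ∈ Finset.univ \ {m}, ∑ j ∈ Finset.univ \ {m, i},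
          ((A - 1) * (lam m) ^ 2 + A * lam i * lam j
              - (A + 1) * (lam i + lam j) * lam m
              - lam m * (∑ l ∈ Finset.univ \ {i, j, m}, lam l))
            * (x i * x j / (lam i * lam j))) ≤ 0 := by
  classical
  set I : Finset (Fin n) := Finset.univ \ {m} with hIdef
  have hmI : m ∉ I := by simp [hIdef]
  have hcardI : I.card = n - 1 := by
    simp [hIdef, Finset.card_sdiff_of_subset, Finset.card_univ]
  set k : ℝ := (n : ℝ) - 1 with hkdef
  have hn3 : (3:ℝ) ≤ (n:ℝ) := by exact_mod_cast hn
  have hk2 : 2 ≤ k := by simp only [hkdef]; linarith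
  have hk0 : 0 < k := by linarith
  have hkcard : (I.card : ℝ) = k := by
    rw [hcardI, hkdef]
    have h1 : 1 ≤ n := by omega
    push_cast [Nat.cast_sub h1]
    ring
  have hA2' : A ≤ (k+1)/k := by
    have hkn : k + 1 = (n:ℝ) := by simp [hkdef]
    rw [hkn, hkdef]; exact hA2
  have hA0 : 0 < A := by linarith
  have hlam' : ∀ i, lam i ≠ 0 := fun i => (hlam i).ne'
  set S : ℝ := ∑ l, lam l with hSdef
  set T : ℝ := ∑ i ∈ I, lam i with hTdef
  have hTS : T = S - lam m := by
    rw [hTdef, hIdef, hSdef, Finset.sum_sdiff_eq_sub (Finset.subset_univ _),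
      Finset.sum_singleton]
  have hT0 : 0 < T := by
    apply Finset.sum_pos (fun i _ => hlam i)
    rw [← Finset.card_pos, hcardI]; omega
  have hS0 : 0 < S := by have := hlam m; linarith
  set w : Fin n → ℝ := fun i => 2 * lam i + lam m with hwdef
  have hw0 : ∀ i, 0 < w i := fun i => by
    have h1 := hlam i; have h2 := hlam m; simp only [hwdef]; linarith
  have hw' : ∀ i, w i ≠ 0 := fun i => (hw0 i).ne'
  set y : Fin n → ℝ := fun i => x i / lam i with hydef
  set a : Fin n → ℝ := fun i => lam i - lam m with hadef
  set u : ℝ := ∑ i ∈ I, a i * y i with hudef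
  set v : ℝ := ∑ i ∈ I, y i with hvdef
  set Ny : ℝ := (∑ i ∈ I, w i * (y i)^2) + lam m * v^2 with hNydef
  have hset : ∀ i : Fin n, Finset.univ \ {m, i} = I.erase i := by
    intro i; ext j
    simp only [Finset.mem_sdiff, Finset.mem_univ, Finset.mem_insert, Finset.mem_singleton,
      Finset.mem_erase, hIdef, true_and]
    tauto
  have hexpand : ∀ f : Fin n → ℝ, (∑ i ∈ I, f i)^2
      = (∑ i ∈ I, (f i)^2) + ∑ i ∈ I, ∑ j ∈ I.erase i, f i * f j := by
    intro f
    rw [sq, Finset.sum_mul_sum, ← Finset.sum_add_distrib]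
    apply Finset.sum_congr rfl
    intro i hi
    rw [← Finset.sum_erase_add I (fun j => f i * f j) hi]
    ring
  -- Step A : the expression equals A*u^2 - S*Ny
  have key : (∑ i ∈ Finset.univ \ {m},
        ((A - 2) * ((lam i) ^ 2 + (lam m) ^ 2) - (2 * A + 4) * lam i * lam m
            - 2 * (lam i + lam m) * (∑ l ∈ Finset.univ \ {i, m}, lam l))
          * ((x i) ^ 2 / (lam i) ^ 2))
      + (∑ i ∈ Finset.univ \ {m}, ∑ j ∈ Finset.univ \ {m, i},
          ((A - 1) * (lam m) ^ 2 + A * lam i * lam j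
              - (A + 1) * (lam i + lam j) * lam m
              - lam m * (∑ l ∈ Finset.univ \ {i, j, m}, lam l))
            * (x i * x j / (lam i * lam j))) = A * u^2 - S * Ny := by
    have step1 : (∑ i ∈ I,
        ((A - 2) * ((lam i) ^ 2 + (lam m) ^ 2) - (2 * A + 4) * lam i * lam m
            - 2 * (lam i + lam m) * (∑ l ∈ Finset.univ \ {i, m}, lam l))
          * ((x i) ^ 2 / (lam i) ^ 2))
        = ∑ i ∈ I, (A*(a i)^2 - S*(w i) - S*lam m) * (y i)^2 := by
      apply Finset.sum_congr rfl
      intro i hi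
      have hi' : i ≠ m := by
        rw [hIdef] at hi; simp only [Finset.mem_sdiff, Finset.mem_singleton] at hi
        exact hi.2
      have hs : (∑ l ∈ Finset.univ \ {i, m}, lam l) = S - (lam i + lam m) := by
        rw [Finset.sum_sdiff_eq_sub (Finset.subset_univ _), Finset.sum_pair hi', ← hSdef]
      have hy2 : x i ^ 2 / lam i ^ 2 = (y i)^2 := by
        simp only [hydef]; rw [div_pow]
      rw [hs, hy2]
      simp only [hadef, hwdef]
      ring
    have step2 : (∑ i ∈ I, ∑ j ∈ Finset.univ \ {m, i},
          ((A - 1) * (lam m) ^ 2 + A * lam i * lam j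
              - (A + 1) * (lam i + lam j) * lam m
              - lam m * (∑ l ∈ Finset.univ \ {i, j, m}, lam l))
            * (x i * x j / (lam i * lam j)))
        = ∑ i ∈ I, ∑ j ∈ I.erase i, (A*(a i * y i)*(a j * y j) - S*lam m*(y i * y j)) := by
      apply Finset.sum_congr rfl
      intro i hi
      have hi' : i ≠ m := by
        rw [hIdef] at hi; simp only [Finset.mem_sdiff, Finset.mem_singleton] at hi
        exact hi.2
      rw [hset i]
      apply Finset.sum_congr rfl
      intro j hj
      have hj1 : j ≠ i := (Finset.mem_erase.mp hj).1
      have hj' : j ≠ m := by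
        have := (Finset.mem_erase.mp hj).2
        rw [hIdef] at this; simp only [Finset.mem_sdiff, Finset.mem_singleton] at this
        exact this.2
      have hij : i ∉ ({j, m} : Finset (Fin n)) := by
        simp only [Finset.mem_insert, Finset.mem_singleton]
        push_neg; exact ⟨fun h => hj1 h.symm, hi'⟩
      have hjm : j ∉ ({m} : Finset (Fin n)) := by
        simp only [Finset.mem_singleton]; exact hj'
      have hs : (∑ l ∈ Finset.univ \ {i, j, m}, lam l) = S - (lam i + (lam j + lam m)) := by
        rw [Finset.sum_sdiff_eq_sub (Finset.subset_univ _), Finset.sum_insert hij,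
          Finset.sum_insert hjm, Finset.sum_singleton, ← hSdef]
      have hyy : x i * x j / (lam i * lam j) = y i * y j := by
        simp only [hydef]; rw [div_mul_div_comm]
      rw [hs, hyy]
      simp only [hadef]
      ring
    rw [step1, step2]
    have e1 : ∑ i ∈ I, (A*(a i)^2 - S*(w i) - S*lam m) * (y i)^2
        = A * (∑ i ∈ I, (a i * y i)^2) - S * (∑ i ∈ I, w i * (y i)^2)
          - S*lam m * (∑ i ∈ I, (y i)^2) := by
      rw [Finset.mul_sum, Finset.mul_sum, Finset.mul_sum, ← Finset.sum_sub_distrib,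
        ← Finset.sum_sub_distrib]
      exact Finset.sum_congr rfl fun i _ => by ring
    have e2 : ∑ i ∈ I, ∑ j ∈ I.erase i, (A*(a i * y i)*(a j * y j) - S*lam m*(y i * y j))
        = A * (∑ i ∈ I, ∑ j ∈ I.erase i, (a i * y i)*(a j * y j))
          - S*lam m * (∑ i ∈ I, ∑ j ∈ I.erase i, y i * y j) := by
      rw [Finset.mul_sum, Finset.mul_sum, ← Finset.sum_sub_distrib]
      apply Finset.sum_congr rfl
      intro i _
      rw [Finset.mul_sum, Finset.mul_sum, ← Finset.sum_sub_distrib]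
      exact Finset.sum_congr rfl fun j _ => by ring
    rw [e1, e2, hNydef, hudef, hvdef, hexpand (fun i => a i * y i), hexpand y]
    ring
  rw [key]
  -- Now the quadratic form analysis
  set R : ℝ := ∑ i ∈ I, lam m / w i with hRdef
  have hR0 : 0 < R := by
    apply Finset.sum_pos (fun i _ => div_pos (hlam m) (hw0 i))
    rw [← Finset.card_pos, hcardI]; omega
  have hRk : R ≤ k := by
    rw [hRdef, ← hkcard]
    calc ∑ i ∈ I, lam m / w i ≤ ∑ i ∈ I, 1 := by
          apply Finset.sum_le_sum
          intro i _
          rw [div_le_one (hw0 i)]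
          have := hlam i; simp only [hwdef]; linarith
      _ = (I.card : ℝ) := by simp
  have h1R : (0:ℝ) < 1 + R := by linarith
  set μ : ℝ := (k+3)/(2*(1+R)) with hμdef
  set g : Fin n → ℝ := fun i => 1/2 - μ * (lam m / w i) with hgdef
  set G : ℝ := ∑ i ∈ I, g i with hGdef
  set Φ : ℝ := (∑ i ∈ I, w i * (g i)^2) + lam m * G^2 with hΦdef
  have hμR : μ * (1 + R) = (k+3)/2 := by
    rw [hμdef]
    field_simp
  have hG : G = k/2 - μ * R := by
    rw [hGdef, hgdef, hRdef]
    rw [Finset.sum_sub_distrib, Finset.sum_const, ← Finset.mul_sum]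
    rw [nsmul_eq_mul, hkcard]; ring
  have ha : ∀ i ∈ I, w i * g i + lam m * G = a i := by
    intro i _
    have hwg : w i * g i = w i / 2 - μ * lam m := by
      simp only [hgdef]
      field_simp [hw' i]
    rw [hwg, hG]
    simp only [hadef, hwdef]
    linear_combination (-(lam m)) * hμR
  have hCr : (∑ i ∈ I, (w i * g i) * y i) + lam m * G * v = u := by
    rw [hudef, hvdef, show lam m * G * (∑ i ∈ I, y i) = ∑ i ∈ I, (lam m * G) * y i from
      Finset.mul_sum _ _ _, ← Finset.sum_add_distrib]
    apply Finset.sum_congr rfl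
    intro i hi
    linear_combination (y i) * (ha i hi)
  have hΦa : Φ = ∑ i ∈ I, a i * g i := by
    rw [hΦdef, show lam m * G^2 = ∑ i ∈ I, (lam m * G) * g i from by
      rw [← Finset.mul_sum, ← hGdef]; ring, ← Finset.sum_add_distrib]
    apply Finset.sum_congr rfl
    intro i hi
    linear_combination (g i) * (ha i hi)
  -- nonnegativity of the quadratic form
  have hq0 : ∀ z : Fin n → ℝ, 0 ≤ (∑ i ∈ I, w i * (z i)^2) + lam m * (∑ i ∈ I, z i)^2 := by
    intro z
    have h1 : 0 ≤ ∑ i ∈ I, w i * (z i)^2 :=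
      Finset.sum_nonneg (fun i _ => mul_nonneg (hw0 i).le (sq_nonneg _))
    have h2 : 0 ≤ lam m * (∑ i ∈ I, z i)^2 := mul_nonneg (hlam m).le (sq_nonneg _)
    linarith
  have hΦ0 : 0 ≤ Φ := hq0 g
  have hNy0 : 0 ≤ Ny := hq0 y
  -- bilinear expansion
  have hbil : ∀ α β : ℝ, (∑ i ∈ I, w i * (α * y i + β * g i)^2)
      + lam m * (∑ i ∈ I, (α * y i + β * g i))^2
      = α^2 * Ny + 2*α*β*u + β^2 * Φ := by
    intro α β
    have h1 : ∑ i ∈ I, w i * (α * y i + β * g i)^2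
        = α^2 * (∑ i ∈ I, w i * (y i)^2) + 2*α*β*(∑ i ∈ I, (w i * g i) * y i)
          + β^2 * (∑ i ∈ I, w i * (g i)^2) := by
      rw [Finset.mul_sum, Finset.mul_sum, Finset.mul_sum, ← Finset.sum_add_distrib,
        ← Finset.sum_add_distrib]
      exact Finset.sum_congr rfl fun i _ => by ring
    have h2 : ∑ i ∈ I, (α * y i + β * g i) = α*v + β*G := by
      rw [hvdef, hGdef, Finset.mul_sum, Finset.mul_sum, ← Finset.sum_add_distrib]
    rw [h1, h2, hNydef, hΦdef]
    linear_combination (2*α*β) * hCr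
  -- Cauchy-Schwarz: u^2 ≤ Φ * Ny
  have hCS : u^2 ≤ Φ * Ny := by
    have e1 := hq0 (fun i => Φ * y i + (-u) * g i)
    have e2 := hq0 (fun i => (-u) * y i + Ny * g i)
    have e3 := hq0 (fun i => 1 * y i + 1 * g i)
    have e4 := hq0 (fun i => 1 * y i + (-1) * g i)
    rw [hbil Φ (-u)] at e1
    rw [hbil (-u) Ny] at e2
    rw [hbil 1 1] at e3
    rw [hbil 1 (-1)] at e4
    rcases lt_or_eq_of_le hΦ0 with hΦp | hΦz
    · have e1' : 0 ≤ Φ * (Φ*Ny - u^2) := by linarith [e1]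
      have := (mul_nonneg_iff_of_pos_left hΦp).mp e1'
      linarith
    · rcases lt_or_eq_of_le hNy0 with hNyp | hNyz
      · have e2' : 0 ≤ Ny * (Ny*Φ - u^2) := by linarith [e2]
        have := (mul_nonneg_iff_of_pos_left hNyp).mp e2'
        linarith
      · have hu0 : u = 0 := by linarith [e3, e4]
        rw [hu0, ← hΦz]
        simp
  -- closed form for Φ
  have hΦval : 4*(1+R)*Φ = 2*(1+R)*T - lam m * (k^2 + 5*k - k*R - 9*R) := by
    rw [hΦa]
    have hterm : ∀ i ∈ I, a i * g i
        = lam i/2 - lam m/2 - μ*lam m/2 + (3/2)*μ*lam m*(lam m / w i) := by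
      intro i _
      simp only [hadef, hgdef]
      field_simp [hw' i]
      ring
    rw [Finset.sum_congr rfl hterm]
    have hs1 : ∑ i ∈ I, (lam i/2 - lam m/2 - μ*lam m/2 + (3/2)*μ*lam m*(lam m / w i))
        = T/2 - (I.card : ℝ)*(lam m/2) - (I.card : ℝ)*(μ*lam m/2)
          + (3/2)*μ*lam m*R := by
      rw [Finset.sum_add_distrib, Finset.sum_sub_distrib, Finset.sum_sub_distrib,
        Finset.sum_const, Finset.sum_const, ← Finset.mul_sum, ← hRdef,
        ← Finset.sum_div, ← hTdef]
      simp [nsmul_eq_mul]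
    rw [hs1, hkcard]
    linear_combination (lam m * (6*R - 2*k)) * hμR
  -- Cauchy-Schwarz for weights: k^2*lam m ≤ R*(2T + k*lam m)
  have hsumw : ∑ i ∈ I, w i = 2*T + k*lam m := by
    simp only [hwdef]
    rw [Finset.sum_add_distrib, Finset.sum_const, ← Finset.mul_sum, ← hTdef,
      nsmul_eq_mul, hkcard]
  have hRw : R = lam m * ∑ i ∈ I, 1/(w i) := by
    rw [hRdef, Finset.mul_sum]
    exact Finset.sum_congr rfl fun i _ => by rw [div_eq_mul_inv, one_div, mul_comm]
    
  have hCS2 : k^2 ≤ (2*T + k*lam m) * (∑ i ∈ I, 1/(w i)) := by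
    have h := Finset.sum_mul_sq_le_sq_mul_sq I (fun i => Real.sqrt (w i))
      (fun i => 1/Real.sqrt (w i))
    have h1 : ∀ i ∈ I, Real.sqrt (w i) * (1/Real.sqrt (w i)) = 1 := by
      intro i _
      have : Real.sqrt (w i) ≠ 0 := by
        rw [Real.sqrt_ne_zero']; exact hw0 i
      field_simp
    have h2 : ∀ i ∈ I, (Real.sqrt (w i))^2 = w i := fun i _ => Real.sq_sqrt (hw0 i).le
    have h3 : ∀ i ∈ I, (1/Real.sqrt (w i))^2 = 1/(w i) := by
      intro i _
      rw [div_pow, one_pow, Real.sq_sqrt (hw0 i).le]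
    rw [Finset.sum_congr rfl h1, Finset.sum_congr rfl h2, Finset.sum_congr rfl h3,
      Finset.sum_const, nsmul_eq_mul, hkcard, mul_one, hsumw] at h
    exact h
  have hT_CS : k^2 * lam m ≤ R * (2*T + k*lam m) := by
    have := mul_le_mul_of_nonneg_right hCS2 (hlam m).le
    calc k^2 * lam m ≤ (2*T + k*lam m) * (∑ i ∈ I, 1/(w i)) * lam m := this
      _ = R * (2*T + k*lam m) := by rw [hRw]; ring
  -- Scalar inequality A*Φ ≤ S
  have hC : A * Φ ≤ S := by
    rcases le_or_gt Φ 0 with h | h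
    · have h0 : 0 ≤ A * (-Φ) := mul_nonneg hA0.le (neg_nonneg.2 h)
      linarith [hS0, h0]
    · have h1 : A*Φ ≤ ((k+1)/k)*Φ := mul_le_mul_of_nonneg_right hA2' h.le
      have hsuf : (k+1)*Φ ≤ k*(T+lam m) := by
        have hpos : 0 ≤ R * (4*k*(1+R)*(T+lam m)
            - (k+1)*(2*(1+R)*T - lam m*(k^2+5*k-k*R-9*R))) := by
          have hid : R * (4*k*(1+R)*(T+lam m)
              - (k+1)*(2*(1+R)*T - lam m*(k^2+5*k-k*R-9*R)))
              = (k-1)*(1+R)*(2*R*T - k*lam m*(k-R))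
                + lam m*(k-R)*((2*k^2+5*k+9)*R + k*(k-1)) := by ring
          rw [hid]
          have p1 : 0 ≤ 2*R*T - k*lam m*(k-R) := by linarith [hT_CS]

          have p2 : 0 ≤ lam m*(k-R)*((2*k^2+5*k+9)*R + k*(k-1)) := by
            apply mul_nonneg (mul_nonneg (hlam m).le (by linarith))
            have q1 : 0 ≤ (2*k^2+5*k+9)*R := by
              have : (0:ℝ) < k^2 := by positivity
              exact mul_nonneg (by linarith) hR0.le
            have q2 : 0 ≤ k*(k-1) := mul_nonneg hk0.le (by linarith)
            linarith
          have p3 : 0 ≤ (k-1)*(1+R)*(2*R*T - k*lam m*(k-R)) :=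
            mul_nonneg (mul_nonneg (by linarith) h1R.le) p1
          linarith
        have hXY : (k+1)*(2*(1+R)*T - lam m*(k^2+5*k-k*R-9*R))
            ≤ 4*k*(1+R)*(T+lam m) := by
          by_contra hcon
          push_neg at hcon
          have hneg := mul_pos hR0 (sub_pos.2 hcon)
          linarith [hpos, hneg]
        have h4 : (4*(1+R)) * ((k+1)*Φ)
            = (k+1)*(2*(1+R)*T - lam m*(k^2+5*k-k*R-9*R)) := by
          linear_combination (k+1) * hΦval
        have h5 : (4*(1+R))*(k*(T+lam m)) = 4*k*(1+R)*(T+lam m) := by ring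
        have h3 : (4*(1+R)) * ((k+1)*Φ) ≤ (4*(1+R))*(k*(T+lam m)) := by
          rw [h4, h5]; exact hXY
        exact le_of_mul_le_mul_left h3 (by linarith)
      have h6 : ((k+1)/k)*Φ ≤ T + lam m := by
        rw [div_mul_eq_mul_div, div_le_iff₀ hk0]
        linarith [hsuf]

      have hST : S = T + lam m := by linarith [hTS]
      calc A * Φ ≤ (k+1)/k * Φ := h1
        _ ≤ T + lam m := h6
        _ = S := hST.symm
  have f1 : A * u^2 ≤ A * (Φ * Ny) := mul_le_mul_of_nonneg_left hCS hA0.le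
  have f2 : (A * Φ) * Ny ≤ S * Ny := mul_le_mul_of_nonneg_right hC hNy0
  have f3 : A * (Φ * Ny) = (A * Φ) * Ny := by ring
  linarith
end
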